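/- Let s ≤ r be tuples of positive reals with r_α < 1 for a fixed index α. Then the element (1+T_α)^p − 1 is a unit in the Banach algebra Π_{[s,r]}; more precisely (1+T_α)^p − 1 = T_α^p · (1 + u) where u = Σ_{k=1}^{p−1} binom(p,k) T_α^{k−p} satisfies ‖u‖_{[s,r]} < 1, so that 1 + u is invertible by a geometric series and T_α^p is invertible in Π_{[s,r]}. -/

import Mathlib

/-!
Expanding the binomial, `(1 + T)^p - 1 = T^p (1 + u)` with `u = ∑_{0<k<p} C(p,k) T^(k-p)`, and `T`
is already a unit of the Laurent ring. Each `C(p,k)` with `0 < k < p` is divisible by `p`, so the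
monomial `C(p,k) T^(k-p)` has Gauss norm `p⁻¹ · p^(t(p-k)/(p-1)) ≤ p^(t-1)` at every radius
`0 ≤ t ≤ r_α < 1`. As `|·|_p` is ultrametric, the Gauss norm of a sum of monomials is at most the
largest of theirs, so `‖u‖_[s,r] < 1` and the geometric series inverts `1 + u` in `Π_[s,r]`.
-/

open scoped BigOperators

/-- The weight `p^{-(t₁m₁+⋯+tₙmₙ)/(p-1)}` of the monomial `T^m` for the Gauss norm. -/
noncomputable def gaussWeight (p : ℕ) {n : ℕ} (t : Fin n → ℝ) (m : Fin n → ℤ) : ℝ :=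
  (p : ℝ) ^ (-(∑ α, t α * (m α : ℝ)) / ((p : ℝ) - 1))

/-- The Gauss norm `‖Σ aₘ Tᵐ‖_t` on the Laurent polynomial ring
`ℚ_p[T₁^{±1},…,Tₙ^{±1}]`, realized as the monoid algebra of `ℤⁿ` over `ℚ_p`. -/
noncomputable def gaussNorm (p : ℕ) [Fact p.Prime] {n : ℕ} (t : Fin n → ℝ)
    (f : AddMonoidAlgebra ℚ_[p] (Fin n → ℤ)) : ℝ :=
  ⨆ m : Fin n → ℤ, ‖f.coeff m‖ * gaussWeight p t m

/-- The corner tuple of the box `∏ [sα, rα]` indexed by `c : Fin n → Bool`. -/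
def corner {n : ℕ} (s r : Fin n → ℝ) (c : Fin n → Bool) : Fin n → ℝ :=
  fun α => if c α then r α else s α

/-- The interval norm `‖f‖_{[s,r]}`: the maximum of the Gauss norms over the `2ⁿ` corners. -/
noncomputable def intervalGaussNorm (p : ℕ) [Fact p.Prime] {n : ℕ} (s r : Fin n → ℝ)
    (f : AddMonoidAlgebra ℚ_[p] (Fin n → ℤ)) : ℝ :=
  ⨆ c : Fin n → Bool, gaussNorm p (corner s r c) f

/-- The variable `T_α` of the Laurent polynomial ring, as the monomial with exponent
`Pi.single α 1`. -/
noncomputable def Tvar (p : ℕ) [Fact p.Prime] {n : ℕ} (α : Fin n) :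
    AddMonoidAlgebra ℚ_[p] (Fin n → ℤ) :=
  AddMonoidAlgebra.single (Pi.single α (1 : ℤ)) 1

/-- The element `u = Σ_{k=1}^{p−1} binom(p,k) T_α^{k−p}` of the Laurent polynomial ring. -/
noncomputable def uElt (p : ℕ) [Fact p.Prime] {n : ℕ} (α : Fin n) :
    AddMonoidAlgebra ℚ_[p] (Fin n → ℤ) :=
  ∑ k ∈ Finset.Ico 1 p,
    AddMonoidAlgebra.single (Pi.single α ((k : ℤ) - (p : ℤ))) ((p.choose k : ℚ_[p]))

/-- A completion `Π_{[s,r]}` of the Laurent polynomial ring with respect to a norm `N`. -/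
structure GaussCompletion (p : ℕ) [Fact p.Prime] (n : ℕ)
    (N : AddMonoidAlgebra ℚ_[p] (Fin n → ℤ) → ℝ) where
  carrier : Type
  [normedRing : NormedCommRing carrier]
  [normedAlgebra : NormedAlgebra ℚ_[p] carrier]
  [complete : CompleteSpace carrier]
  emb : AddMonoidAlgebra ℚ_[p] (Fin n → ℤ) →ₐ[ℚ_[p]] carrier
  isometric : ∀ f, ‖emb f‖ = N f
  denseRange : DenseRange (fun f => emb f)

attribute [instance] GaussCompletion.normedRing GaussCompletion.normedAlgebra
  GaussCompletion.complete

open AddMonoidAlgebra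

section LaurentPolynomial

variable {p : ℕ} [Fact p.Prime] {n : ℕ}

lemma Tvar_pow (α : Fin n) (k : ℕ) : Tvar p α ^ k = single (Pi.single α (k : ℤ)) 1 := by
  induction k with
  | zero => simp [one_def]
  | succ k ih =>
    rw [pow_succ, ih, Tvar, single_mul_single, one_mul, ← Pi.single_add]
    push_cast
    rfl

lemma Tvar_pow_mul_single (α : Fin n) (k : ℕ) (j : ℤ) (c : ℚ_[p]) :
    Tvar p α ^ k * single (Pi.single α j) c = single (Pi.single α (k + j)) c := by
  rw [Tvar_pow, single_mul_single, one_mul, Pi.single_add]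

lemma isUnit_Tvar (α : Fin n) : IsUnit (Tvar p α) :=
  IsUnit.of_mul_eq_one (single (-Pi.single α 1) 1) <| by
    rw [Tvar, single_mul_single, add_neg_cancel, one_mul, one_def]

lemma one_add_Tvar_pow (α : Fin n) (m : ℕ) :
    (1 + Tvar p α) ^ m =
      ∑ k ∈ Finset.range (m + 1), single (Pi.single α (k : ℤ)) (m.choose k : ℚ_[p]) := by
  rw [add_comm, add_pow]
  refine Finset.sum_congr rfl fun k _ => ?_
  rw [one_pow, mul_one, natCast_def, ← Pi.single_zero α, Tvar_pow_mul_single, add_zero]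

lemma one_add_Tvar_pow_sub_one (α : Fin n) :
    (1 + Tvar p α) ^ p - 1 = Tvar p α ^ p * (1 + uElt p α) := by
  have hp : 0 < p := (Fact.out : p.Prime).pos
  rw [one_add_Tvar_pow, Finset.sum_range_succ, Finset.range_eq_Ico,
    Finset.sum_eq_sum_Ico_succ_bot hp, mul_add, mul_one, uElt, Finset.mul_sum]
  simp only [Tvar_pow_mul_single, add_sub_cancel]
  simp only [Tvar_pow, Nat.choose_zero_right, Nat.choose_self, Nat.cast_zero, Nat.cast_one,
    Pi.single_zero, ← one_def]
  abel

end LaurentPolynomial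

lemma isUnit_one_add_of_norm_lt_one {R : Type*} [NormedRing R] [HasSummableGeomSeries R] {x : R}
    (h : ‖x‖ < 1) : IsUnit (1 + x) := by
  simpa using isUnit_one_sub_of_norm_lt_one (x := -x) (by rwa [norm_neg])

section GaussNorm

variable {p n : ℕ}

lemma gaussWeight_single (t : Fin n → ℝ) (α : Fin n) (j : ℤ) :
    gaussWeight p t (Pi.single α j) = (p : ℝ) ^ (-(t α * j) / ((p : ℝ) - 1)) := by
  rw [gaussWeight, Fintype.sum_eq_single α fun β hβ => by simp [Pi.single_eq_of_ne hβ],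
    Pi.single_eq_same]

variable [Fact p.Prime]

lemma gaussWeight_pos (t : Fin n → ℝ) (m : Fin n → ℤ) : 0 < gaussWeight p t m :=
  Real.rpow_pos_of_pos (Nat.cast_pos.2 (Fact.out : p.Prime).pos) _

lemma gaussNorm_sum_single_le {ι : Type*} (t : Fin n → ℝ) (S : Finset ι) (e : ι → Fin n → ℤ)
    (c : ι → ℚ_[p]) {B : ℝ} (hB : 0 ≤ B) (h : ∀ i ∈ S, ‖c i‖ * gaussWeight p t (e i) ≤ B) :
    gaussNorm p t (∑ i ∈ S, single (e i) (c i)) ≤ B := by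
  refine ciSup_le fun m => ?_
  have hw := gaussWeight_pos (p := p) t m
  rw [← le_div_iff₀ hw, coeff_sum, Finset.sum_apply']
  refine IsUltrametricDist.norm_sum_le_of_forall_le_of_nonneg (div_nonneg hB hw.le) fun i hi => ?_
  rw [coeff_single, Finsupp.single_apply]
  split_ifs with him
  · rw [le_div_iff₀ hw, ← him]
    exact h i hi
  · simpa using div_nonneg hB hw.le

lemma norm_choose_le_inv {k : ℕ} (hk₀ : k ≠ 0) (hkp : k < p) :
    ‖(p.choose k : ℚ_[p])‖ ≤ (p : ℝ)⁻¹ := by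
  have h := (Padic.norm_int_le_pow_iff_dvd (p := p) (p.choose k) 1).2 <| by
    rw [pow_one]
    exact Int.natCast_dvd_natCast.2 ((Fact.out : p.Prime).dvd_choose_self hk₀ hkp)
  simpa using h

lemma gaussNorm_uElt_le (α : Fin n) (t : Fin n → ℝ) (ht : 0 ≤ t α) :
    gaussNorm p t (uElt p α) ≤ (p : ℝ) ^ (t α - 1) := by
  have hp : (1 : ℝ) < p := Nat.one_lt_cast.2 (Fact.out : p.Prime).one_lt
  refine gaussNorm_sum_single_le t _ _ _ (Real.rpow_nonneg (by positivity) _) fun k hk => ?_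
  obtain ⟨hk₁, hkp⟩ := Finset.mem_Ico.1 hk
  have hexp : -(t α * ((k : ℤ) - p : ℤ)) / ((p : ℝ) - 1) ≤ t α := by
    have hk₁' : (1 : ℝ) ≤ k := by exact_mod_cast hk₁
    have hkp' : (k : ℝ) ≤ p := by exact_mod_cast hkp.le
    rw [div_le_iff₀ (by linarith)]
    push_cast
    nlinarith
  calc ‖(p.choose k : ℚ_[p])‖ * gaussWeight p t (Pi.single α ((k : ℤ) - p))
      ≤ (p : ℝ)⁻¹ * (p : ℝ) ^ t α := by
        rw [gaussWeight_single]
        gcongr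
        · exact norm_choose_le_inv (by omega) hkp
        · exact hp.le
    _ = (p : ℝ) ^ (t α - 1) := by
        rw [Real.rpow_sub_one (by positivity), div_eq_inv_mul]

lemma intervalGaussNorm_uElt_lt_one (α : Fin n) {s r : Fin n → ℝ} (hs : 0 ≤ s α)
    (hsr : s α ≤ r α) (hr : r α < 1) : intervalGaussNorm p s r (uElt p α) < 1 := by
  have hp : (1 : ℝ) < p := Nat.one_lt_cast.2 (Fact.out : p.Prime).one_lt
  have hcorner : ∀ c, gaussNorm p (corner s r c) (uElt p α) ≤ (p : ℝ) ^ (r α - 1) := fun c => by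
    have h₀ : 0 ≤ corner s r c α := by unfold corner; split_ifs <;> linarith
    have h₁ : corner s r c α ≤ r α := by unfold corner; split_ifs <;> linarith
    exact (gaussNorm_uElt_le α _ h₀).trans (Real.rpow_le_rpow_of_exponent_le hp.le (by linarith))
  exact (ciSup_le hcorner).trans_lt (Real.rpow_lt_one_of_one_lt_of_neg hp (by linarith))

end GaussNorm

/-- For `0 < s ≤ r` with `r_α < 1`, the element `(1+T_α)^p − 1` is a unit in `Π_{[s,r]}`;
more precisely `(1+T_α)^p − 1 = T_α^p·(1+u)` with `u = Σ_{k=1}^{p−1} binom(p,k) T_α^{k−p}`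
of interval norm `< 1`, so that `1 + u` and `T_α^p`, hence `(1+T_α)^p − 1`, are invertible
in `Π_{[s,r]}`. -/
theorem one_add_T_pow_p_sub_one_isUnit
    (p : ℕ) [Fact p.Prime] (n : ℕ) (α : Fin n) (s r : Fin n → ℝ)
    (hs : ∀ β, 0 < s β) (hsr : ∀ β, s β ≤ r β) (hrα : r α < 1)
    (C : GaussCompletion p n (intervalGaussNorm p s r)) :
    ((1 + Tvar p α) ^ p - 1 : AddMonoidAlgebra ℚ_[p] (Fin n → ℤ)) =
      (Tvar p α) ^ p * (1 + uElt p α) ∧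
    intervalGaussNorm p s r (uElt p α) < 1 ∧
    IsUnit (1 + C.emb (uElt p α)) ∧
    IsUnit (C.emb ((Tvar p α) ^ p)) ∧
    IsUnit (C.emb ((1 + Tvar p α) ^ p - 1)) := by
  have hfactor := one_add_Tvar_pow_sub_one (p := p) α
  have hu := intervalGaussNorm_uElt_lt_one (p := p) α (hs α).le (hsr α) hrα
  have hunit_u : IsUnit (1 + C.emb (uElt p α)) :=
    isUnit_one_add_of_norm_lt_one (by rwa [C.isometric])
  have hunit_T : IsUnit (C.emb (Tvar p α ^ p)) := ((isUnit_Tvar (p := p) α).pow p).map C.emb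
  refine ⟨hfactor, hu, hunit_u, hunit_T, ?_⟩
  rw [hfactor, map_mul, map_add, map_one]
  exact hunit_T.mul hunit_u
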